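/- Let V_{x,θ}^δ := Σ_{z ∈ B_δ(x)} |z⟩⟨z|_θ denote the projector onto strings δn-close to x in basis θ. For any two distinct openings (x,θ) and (x',θ') such that d(z,z') ≥ d − 2δn for all z ∈ B_δ(x), z' ∈ B_δ(x') implies |⟨z|_θ |z'⟩_{θ'}| ≤ 2^{−(d−2δn)/2}, and for any density operator ρ_B: Tr(V_{x,θ}^δ ρ_B) + Tr(V_{x',θ'}^δ ρ_B) ≤ 1 + 2^{−d/2 + δn + h(δ)n}. Consequently the BCJL_δ scheme is 2^{−d/2+δn+h(δ)n}-binding against non-adaptive adversaries. -/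

import Mathlib

open scoped ComplexOrder
open Matrix

noncomputable section

/-- Single-qubit amplitude `⟨c|b⟩_θ`: basis `θ = false` is computational, `θ = true` is
Hadamard (diagonal). -/
def qubitAmp (θb yb cb : Bool) : ℂ :=
  if θb then ((if yb && cb then -1 else 1) : ℂ) / (Real.sqrt 2 : ℂ)
  else if cb = yb then 1 else 0

/-- The state `|y⟩_θ` encoded qubit-wise in the bases given by `θ`. -/
def ketTheta {n : ℕ} (θ y : Fin n → Bool) : (Fin n → Bool) → ℂ :=
  fun c => ∏ i, qubitAmp (θ i) (y i) (c i)

/-- The binary entropy function. -/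
def binEnt (δ : ℝ) : ℝ := -δ * Real.logb 2 δ - (1 - δ) * Real.logb 2 (1 - δ)

/-- `V^δ_{x,θ} = Σ_{z ∈ B_δ(x)} |z⟩⟨z|_θ`: the projector onto strings `δn`-close to `x` in
basis `θ`. -/
def Vproj (n : ℕ) (δ : ℝ) (x θ : Fin n → Bool) :
    Matrix (Fin n → Bool) (Fin n → Bool) ℂ :=
  ∑ z ∈ Finset.univ.filter (fun z => ((hammingDist x z : ℝ) ≤ δ * n)),
    Matrix.vecMulVec (ketTheta θ z) (star (ketTheta θ z))

/-!
Write `P`, `Q` for the two projectors. For a vector `ψ` put `a = Pψ`, `b = Qψ`; if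
`|⟪a, b⟫| ≤ c ‖a‖ ‖b‖`, then `‖a‖² + ‖b‖² = Re ⟪a + b, ψ⟫ ≤ ‖a + b‖ ‖ψ‖` and
`‖a + b‖² ≤ (1 + c) (‖a‖² + ‖b‖²)` give `⟪ψ, (P + Q) ψ⟫ ≤ (1 + c) ‖ψ‖²`. So `P + Q ≤ (1 + c) • 1`
in the Loewner order, and `Tr((P + Q) ρ) ≤ 1 + c` for every density matrix `ρ`.
Expanding `a` and `b` in the two orthonormal families of basis states, `c = γ √(|B| |B'|)` works,
where `γ` bounds the overlaps: `|⟨z|_θ |z'⟩_θ'| ≤ 2^(-d(z,z')/2) ≤ 2^(-(d - 2δn)/2)` by the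
triangle inequality. Finally `|B_δ(x)| ≤ 2^(h(δ)n)`: the weights `δ^d(x,z) (1-δ)^(n-d(x,z))` sum
to `1` and are at least `2^(-h(δ)n)` on the ball.
-/

open Finset RCLike
open scoped InnerProductSpace

section InnerProduct

variable {𝕜 E : Type*} [RCLike 𝕜] [NormedAddCommGroup E] [InnerProductSpace 𝕜 E]

theorem sq_norm_add_sq_norm_le_of_re_inner_eq {a b ψ : E} {c : ℝ} (hc : 0 ≤ c)
    (ha : re ⟪a, ψ⟫_𝕜 = ‖a‖ ^ 2) (hb : re ⟪b, ψ⟫_𝕜 = ‖b‖ ^ 2)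
    (hab : ‖⟪a, b⟫_𝕜‖ ≤ c * (‖a‖ * ‖b‖)) :
    ‖a‖ ^ 2 + ‖b‖ ^ 2 ≤ (1 + c) * ‖ψ‖ ^ 2 := by
  set S := ‖a‖ ^ 2 + ‖b‖ ^ 2
  have hS : S ≤ ‖a + b‖ * ‖ψ‖ := by
    calc S = re ⟪a + b, ψ⟫_𝕜 := by rw [inner_add_left, map_add, ha, hb]
      _ ≤ ‖a + b‖ * ‖ψ‖ := re_inner_le_norm _ _
  have hsum : ‖a + b‖ ^ 2 ≤ (1 + c) * S := by
    have := (RCLike.re_le_norm ⟪a, b⟫_𝕜).trans hab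
    rw [@norm_add_sq 𝕜]
    nlinarith [sq_nonneg (‖a‖ - ‖b‖)]
  rcases (show 0 ≤ S by positivity).eq_or_lt with h0 | hpos
  · rw [← h0]; positivity
  refine le_of_mul_le_mul_left ?_ hpos
  calc S * S ≤ ‖a + b‖ ^ 2 * ‖ψ‖ ^ 2 := by rw [← mul_pow, ← sq]; gcongr
    _ ≤ S * ((1 + c) * ‖ψ‖ ^ 2) := by nlinarith [sq_nonneg ‖ψ‖]

variable {ι κ : Type*}

theorem re_inner_sum_inner_smul (e : ι → E) (s : Finset ι) (ψ : E) :
    re ⟪∑ i ∈ s, ⟪e i, ψ⟫_𝕜 • e i, ψ⟫_𝕜 = ∑ i ∈ s, ‖⟪e i, ψ⟫_𝕜‖ ^ 2 := by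
  simp only [sum_inner, inner_smul_left, RCLike.conj_mul, map_sum, ← ofReal_pow, ofReal_re]

theorem Orthonormal.norm_sum_inner_smul_sq {e : ι → E} (he : Orthonormal 𝕜 e) (s : Finset ι)
    (ψ : E) : ‖∑ i ∈ s, ⟪e i, ψ⟫_𝕜 • e i‖ ^ 2 = ∑ i ∈ s, ‖⟪e i, ψ⟫_𝕜‖ ^ 2 := by
  rw [← inner_self_eq_norm_sq (𝕜 := 𝕜), he.inner_sum]
  simp only [RCLike.conj_mul, map_sum, ← ofReal_pow, ofReal_re]

theorem norm_inner_sum_smul_le {e : ι → E} {f : κ → E} {s : Finset ι} {t : Finset κ} {γ : ℝ}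
    (hγ : ∀ i ∈ s, ∀ j ∈ t, ‖⟪e i, f j⟫_𝕜‖ ≤ γ) (α : ι → 𝕜) (β : κ → 𝕜) :
    ‖⟪∑ i ∈ s, α i • e i, ∑ j ∈ t, β j • f j⟫_𝕜‖ ≤ γ * ((∑ i ∈ s, ‖α i‖) * ∑ j ∈ t, ‖β j‖) := by
  simp only [sum_inner, inner_sum, inner_smul_left, inner_smul_right]
  calc _ ≤ ∑ j ∈ t, ‖β j‖ * ∑ i ∈ s, ‖α i‖ * γ :=
        norm_sum_le_of_le _ fun j hj => by
          rw [norm_mul]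
          gcongr
          refine norm_sum_le_of_le _ fun i hi => ?_
          rw [norm_mul, RCLike.norm_conj]
          exact mul_le_mul_of_nonneg_left (hγ i hi j hj) (norm_nonneg _)
    _ = _ := by simp only [← sum_mul]; ring

theorem Orthonormal.sum_norm_inner_le_sqrt_card_mul {e : ι → E} (he : Orthonormal 𝕜 e)
    (s : Finset ι) (ψ : E) :
    ∑ i ∈ s, ‖⟪e i, ψ⟫_𝕜‖ ≤ √(#s) * ‖∑ i ∈ s, ⟪e i, ψ⟫_𝕜 • e i‖ := by
  rw [← Real.sqrt_sq (norm_nonneg _), ← Real.sqrt_mul (Nat.cast_nonneg _),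
    he.norm_sum_inner_smul_sq]
  exact Real.le_sqrt_of_sq_le sq_sum_le_card_mul_sum_sq

theorem Orthonormal.sum_sq_norm_inner_add_le {e : ι → E} {f : κ → E} (he : Orthonormal 𝕜 e)
    (hf : Orthonormal 𝕜 f) {s : Finset ι} {t : Finset κ} {γ : ℝ} (hγ0 : 0 ≤ γ)
    (hγ : ∀ i ∈ s, ∀ j ∈ t, ‖⟪e i, f j⟫_𝕜‖ ≤ γ) (ψ : E) :
    ∑ i ∈ s, ‖⟪e i, ψ⟫_𝕜‖ ^ 2 + ∑ j ∈ t, ‖⟪f j, ψ⟫_𝕜‖ ^ 2 ≤ (1 + γ * √(#s * #t)) * ‖ψ‖ ^ 2 := by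
  set a := ∑ i ∈ s, ⟪e i, ψ⟫_𝕜 • e i
  set b := ∑ j ∈ t, ⟪f j, ψ⟫_𝕜 • f j
  rw [← he.norm_sum_inner_smul_sq, ← hf.norm_sum_inner_smul_sq]
  refine sq_norm_add_sq_norm_le_of_re_inner_eq (by positivity)
    ((re_inner_sum_inner_smul e s ψ).trans (he.norm_sum_inner_smul_sq s ψ).symm)
    ((re_inner_sum_inner_smul f t ψ).trans (hf.norm_sum_inner_smul_sq t ψ).symm) ?_
  calc ‖⟪a, b⟫_𝕜‖ ≤ γ * ((∑ i ∈ s, ‖⟪e i, ψ⟫_𝕜‖) * ∑ j ∈ t, ‖⟪f j, ψ⟫_𝕜‖) :=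
        norm_inner_sum_smul_le hγ _ _
    _ ≤ γ * ((√(#s) * ‖a‖) * (√(#t) * ‖b‖)) := by
        gcongr
        exacts [he.sum_norm_inner_le_sqrt_card_mul s ψ, hf.sum_norm_inner_le_sqrt_card_mul t ψ]
    _ = γ * √(#s * #t) * (‖a‖ * ‖b‖) := by rw [Real.sqrt_mul (Nat.cast_nonneg _)]; ring

end InnerProduct

section Matrix

variable {𝕜 ι κ : Type*} [RCLike 𝕜] [Fintype ι]

theorem star_dotProduct_sum_vecMulVec_mulVec (v : κ → ι → 𝕜) (s : Finset κ) (ψ : ι → 𝕜) :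
    star ψ ⬝ᵥ ((∑ k ∈ s, vecMulVec (v k) (star (v k))) *ᵥ ψ)
      = ((∑ k ∈ s, ‖⟪WithLp.toLp 2 (v k), WithLp.toLp 2 ψ⟫_𝕜‖ ^ 2 : ℝ) : 𝕜) := by
  simp only [sum_mulVec, vecMulVec_mulVec, dotProduct_sum, dotProduct_smul, op_smul_eq_mul,
    EuclideanSpace.inner_toLp_toLp, ofReal_sum, ofReal_pow]
  refine sum_congr rfl fun k _ => ?_
  rw [star_dotProduct, dotProduct_comm ψ, ← RCLike.conj_mul, star_def]

theorem re_trace_mul_le_of_posSemidef_sub [DecidableEq ι] {M ρ : Matrix ι ι 𝕜} {c : ℝ}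
    (hM : ((c : 𝕜) • 1 - M).PosSemidef) (hρ : ρ.PosSemidef) (htr : ρ.trace = 1) :
    re (M * ρ).trace ≤ c := by
  obtain ⟨C, rfl⟩ : ∃ C : Matrix ι ι 𝕜, ρ = star C * C := by
    open scoped MatrixOrder in
    exact CStarAlgebra.nonneg_iff_eq_star_mul_self.mp hρ.nonneg
  have h := (hM.mul_mul_conjTranspose_same C).trace_nonneg
  rw [trace_mul_cycle, ← star_eq_conjTranspose, mul_sub, trace_sub, Matrix.mul_smul, mul_one,
    trace_smul, htr, trace_mul_comm] at h
  simpa using (RCLike.nonneg_iff.mp h).1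

theorem re_trace_sum_vecMulVec_mul_add_le {κ' : Type*} {v : κ → ι → 𝕜}
    {w : κ' → ι → 𝕜} (hv : Orthonormal 𝕜 fun i => WithLp.toLp 2 (v i))
    (hw : Orthonormal 𝕜 fun j => WithLp.toLp 2 (w j)) {s : Finset κ} {t : Finset κ'} {γ : ℝ}
    (hγ0 : 0 ≤ γ) (hγ : ∀ i ∈ s, ∀ j ∈ t, ‖⟪WithLp.toLp 2 (v i), WithLp.toLp 2 (w j)⟫_𝕜‖ ≤ γ)
    {ρ : Matrix ι ι 𝕜} (hρ : ρ.PosSemidef) (htr : ρ.trace = 1) :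
    re ((∑ i ∈ s, vecMulVec (v i) (star (v i))) * ρ).trace
      + re ((∑ j ∈ t, vecMulVec (w j) (star (w j))) * ρ).trace ≤ 1 + γ * √(#s * #t) := by
  classical
  rw [← map_add, ← trace_add, ← add_mul]
  refine re_trace_mul_le_of_posSemidef_sub (.of_dotProduct_mulVec_nonneg ?_ fun ψ => ?_) hρ htr
  · exact (PosSemidef.one.smul (RCLike.ofReal_nonneg.mpr (by positivity))).isHermitian.sub
      ((posSemidef_sum s fun i _ => posSemidef_vecMulVec_self_star (v i)).add
        (posSemidef_sum t fun j _ => posSemidef_vecMulVec_self_star (w j))).isHermitian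
  · rw [sub_mulVec, dotProduct_sub, smul_mulVec, one_mulVec, dotProduct_smul, add_mulVec,
      dotProduct_add, star_dotProduct_sum_vecMulVec_mulVec, star_dotProduct_sum_vecMulVec_mulVec,
      dotProduct_comm, ← EuclideanSpace.inner_toLp_toLp, inner_self_eq_norm_sq_to_K, smul_eq_mul,
      ← ofReal_pow, ← ofReal_mul, ← ofReal_add, ← ofReal_sub, ofReal_nonneg, sub_nonneg]
    exact hv.sum_sq_norm_inner_add_le hw hγ0 hγ _

end Matrix

def qubitInner (t t' y y' : Bool) : ℂ :=
  ∑ c : Bool, starRingEnd ℂ (qubitAmp t y c) * qubitAmp t' y' c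

lemma inv_sqrt_two_mul_self : ((Real.sqrt 2 : ℂ))⁻¹ * (Real.sqrt 2 : ℂ)⁻¹ = 2⁻¹ := by
  rw [← mul_inv, ← Complex.ofReal_mul, Real.mul_self_sqrt zero_le_two, Complex.ofReal_ofNat]

lemma qubitInner_self (t y y' : Bool) : qubitInner t t y y' = if y = y' then 1 else 0 := by
  cases t <;> cases y <;> cases y' <;>
    norm_num [qubitInner, qubitAmp, Fintype.sum_bool, div_eq_mul_inv, inv_sqrt_two_mul_self]

lemma norm_qubitInner_of_ne {t t' : Bool} (h : t ≠ t') (y y' : Bool) :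
    ‖qubitInner t t' y y'‖ = (Real.sqrt 2)⁻¹ := by
  cases t <;> cases t' <;> cases y <;> cases y' <;> simp_all [qubitInner, qubitAmp]

lemma norm_qubitInner_le (t t' y y' : Bool) :
    ‖qubitInner t t' y y'‖ ≤ (Real.sqrt 2)⁻¹ ^ (if y = y' then 0 else 1) := by
  rcases eq_or_ne t t' with rfl | h
  · rw [qubitInner_self]; split_ifs <;> simp
  · rw [norm_qubitInner_of_ne h]
    split_ifs
    · simpa using inv_le_one_of_one_le₀ Real.one_lt_sqrt_two.le
    · simp

abbrev ket {n : ℕ} (θ z : Fin n → Bool) : EuclideanSpace ℂ (Fin n → Bool) :=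
  WithLp.toLp 2 (ketTheta θ z)

lemma inner_ket {n : ℕ} (θ θ' z z' : Fin n → Bool) :
    ⟪ket θ z, ket θ' z'⟫_ℂ = ∏ i, qubitInner (θ i) (θ' i) (z i) (z' i) := by
  simp only [EuclideanSpace.inner_toLp_toLp, dotProduct, qubitInner, Fintype.prod_sum, ketTheta,
    Pi.star_apply, star_prod, ← prod_mul_distrib]
  simp [mul_comm]

lemma orthonormal_ket {n : ℕ} (θ : Fin n → Bool) : Orthonormal ℂ (ket θ) := by
  rw [orthonormal_iff_ite]
  intro z z'
  simp [inner_ket, qubitInner_self, Finset.prod_boole, funext_iff]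

lemma norm_inner_ket_le {n : ℕ} (θ θ' z z' : Fin n → Bool) :
    ‖⟪ket θ z, ket θ' z'⟫_ℂ‖ ≤ (Real.sqrt 2)⁻¹ ^ hammingDist z z' := by
  rw [inner_ket, norm_prod]
  refine (prod_le_prod (fun _ _ => norm_nonneg _) fun i _ => norm_qubitInner_le _ _ _ _).trans_eq ?_
  rw [prod_pow_eq_pow_sum, hammingDist]
  simp [sum_ite]

lemma two_rpow_neg_binEnt_mul_le {δ : ℝ} (hδ0 : 0 ≤ δ) (hδ : δ ≤ 1 / 2) {k n : ℕ} (hkn : k ≤ n)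
    (hk : (k : ℝ) ≤ δ * n) : (2 : ℝ) ^ (-(binEnt δ * n)) ≤ δ ^ k * (1 - δ) ^ (n - k) := by
  rcases hδ0.eq_or_lt with rfl | hδ0
  · have hk0 : (k : ℝ) ≤ 0 := by simpa using hk
    obtain rfl : k = 0 := by exact_mod_cast hk0.antisymm k.cast_nonneg
    simp [binEnt]
  set L := Real.logb 2 δ
  set L' := Real.logb 2 (1 - δ)
  have hLL' : L ≤ L' := Real.logb_le_logb_of_le one_lt_two hδ0 (by linarith)
  have hpow : δ ^ k * (1 - δ) ^ (n - k) = (2 : ℝ) ^ (L * k + L' * (n - k : ℕ)) := by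
    rw [Real.rpow_add two_pos, Real.rpow_mul_natCast zero_le_two,
      Real.rpow_mul_natCast zero_le_two, Real.rpow_logb two_pos one_lt_two.ne' hδ0,
      Real.rpow_logb two_pos one_lt_two.ne' (by linarith)]
  have hexp : -(binEnt δ * n) = L * (δ * n) + L' * (n - δ * n) := by simp only [binEnt, L, L']; ring
  rw [hpow, hexp, Real.rpow_le_rpow_left_iff one_lt_two, Nat.cast_sub hkn]
  nlinarith

lemma sum_prod_ite_eq_pow {n : ℕ} (x : Fin n → Bool) (p q : ℝ) :
    ∑ z : Fin n → Bool, ∏ i, (if x i = z i then q else p) = (p + q) ^ n := by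
  rw [← Fintype.prod_sum (fun i b => if x i = b then q else p), ← Fin.prod_const]
  refine prod_congr rfl fun i _ => ?_
  cases x i <;> simp [add_comm]

lemma prod_ite_eq_pow_hammingDist {n : ℕ} (x z : Fin n → Bool) (p q : ℝ) :
    ∏ i, (if x i = z i then q else p) = p ^ hammingDist x z * q ^ (n - hammingDist x z) := by
  have hcard := card_filter_add_card_filter_not (s := univ) (fun i => x i = z i)
  rw [card_univ, Fintype.card_fin] at hcard
  rw [prod_ite, prod_const, prod_const, mul_comm, hammingDist]
  simp only [ne_eq, ← hcard, Nat.add_sub_cancel]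

lemma card_hammingBall_le {n : ℕ} {δ : ℝ} (hδ0 : 0 ≤ δ) (hδ : δ ≤ 1 / 2) (x : Fin n → Bool) :
    (#{z | (hammingDist x z : ℝ) ≤ δ * n} : ℝ) ≤ 2 ^ (binEnt δ * n) := by
  set W : (Fin n → Bool) → ℝ := fun z => ∏ i, if x i = z i then 1 - δ else δ
  have hW : ∀ z, 0 ≤ W z := fun z => prod_nonneg fun i _ => by split_ifs <;> linarith
  have hball : ∀ z ∈ ({z | (hammingDist x z : ℝ) ≤ δ * n} : Finset _),
      (2 : ℝ) ^ (-(binEnt δ * n)) ≤ W z := fun z hz => by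
    simp only [W, prod_ite_eq_pow_hammingDist]
    exact two_rpow_neg_binEnt_mul_le hδ0 hδ (hammingDist_le_card_fintype.trans_eq (by simp))
      (mem_filter.1 hz).2
  have hsum : ∑ z, W z = 1 := by simp [W, sum_prod_ite_eq_pow]
  have := (card_nsmul_le_sum _ _ _ hball).trans
    ((sum_le_sum_of_subset_of_nonneg (subset_univ _) fun z _ _ => hW z).trans_eq hsum)
  rwa [nsmul_eq_mul, Real.rpow_neg zero_le_two, ← div_eq_mul_inv, div_le_one (by positivity)]
    at this

lemma inv_sqrt_two_pow (k : ℕ) : (Real.sqrt 2)⁻¹ ^ k = (2 : ℝ) ^ (-(k : ℝ) / 2) := by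
  rw [Real.sqrt_eq_rpow, ← Real.rpow_neg zero_le_two, ← Real.rpow_mul_natCast zero_le_two]
  ring_nf

lemma norm_inner_ket_le_of_mem_balls {n d : ℕ} {δ : ℝ} {x x' z z' : Fin n → Bool}
    (θ θ' : Fin n → Bool) (hd : d ≤ hammingDist x x') (hz : (hammingDist x z : ℝ) ≤ δ * n)
    (hz' : (hammingDist x' z' : ℝ) ≤ δ * n) :
    ‖⟪ket θ z, ket θ' z'⟫_ℂ‖ ≤ (2 : ℝ) ^ (-((d : ℝ) - 2 * (δ * n)) / 2) := by
  refine (norm_inner_ket_le θ θ' z z').trans ?_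
  rw [inv_sqrt_two_pow, Real.rpow_le_rpow_left_iff one_lt_two]
  have htri : hammingDist x x' ≤ hammingDist x z + hammingDist z z' + hammingDist x' z' :=
    (hammingDist_triangle x z x').trans <| by
      rw [add_assoc, hammingDist_comm x' z']
      exact Nat.add_le_add_left (hammingDist_triangle _ _ _) _
  have : (d : ℝ) ≤ hammingDist x z + hammingDist z z' + hammingDist x' z' := by
    exact_mod_cast hd.trans htri
  linarith

theorem stmt16_general {n d : ℕ} (δ : ℝ) (hδ0 : 0 ≤ δ) (hδ : δ ≤ 1 / 2)
    (x x' θ θ' : Fin n → Bool)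
    (hd : d ≤ hammingDist x x')
    (ρB : Matrix (Fin n → Bool) (Fin n → Bool) ℂ)
    (hρ : ρB.PosSemidef) (htr : ρB.trace = 1) :
    (Vproj n δ x θ * ρB).trace.re + (Vproj n δ x' θ' * ρB).trace.re
      ≤ 1 + (2 : ℝ) ^ (-(d : ℝ) / 2 + δ * n + binEnt δ * n) := by
  set B := ({z | (hammingDist x z : ℝ) ≤ δ * n} : Finset (Fin n → Bool))
  set B' := ({z | (hammingDist x' z : ℝ) ≤ δ * n} : Finset (Fin n → Bool))
  set γ : ℝ := 2 ^ (-((d : ℝ) - 2 * (δ * n)) / 2)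
  have key : (Vproj n δ x θ * ρB).trace.re + (Vproj n δ x' θ' * ρB).trace.re
      ≤ 1 + γ * √(#B * #B') :=
    re_trace_sum_vecMulVec_mul_add_le (orthonormal_ket θ) (orthonormal_ket θ') (by positivity)
      (fun z hz z' hz' =>
        norm_inner_ket_le_of_mem_balls θ θ' hd (mem_filter.1 hz).2 (mem_filter.1 hz').2) hρ htr
  refine key.trans (add_le_add_right ?_ 1)
  calc γ * √(#B * #B') ≤ γ * √(2 ^ (binEnt δ * n) * 2 ^ (binEnt δ * n)) := by
        gcongr
        exacts [card_hammingBall_le hδ0 hδ x, card_hammingBall_le hδ0 hδ x']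
    _ = _ := by
        rw [Real.sqrt_mul_self (by positivity), ← Real.rpow_add two_pos]
        ring_nf

/-- For two distinct openings `(x,θ) ≠ (x',θ')` with `d(x,x') ≥ d` (same syndrome of a
distance-`d` code), and any density operator `ρ_B`:
`Tr(V^δ_{x,θ} ρ_B) + Tr(V^δ_{x',θ'} ρ_B) ≤ 1 + 2^{−d/2 + δn + h(δ)n}`.
Consequently the BCJL_δ scheme is `2^{−d/2+δn+h(δ)n}`-binding against non-adaptive
adversaries. -/
theorem stmt16 {n d : ℕ} (δ : ℝ) (hδ0 : 0 ≤ δ) (hδ : δ ≤ 1 / 2)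
    (x x' θ θ' : Fin n → Bool)
    (hne : (x, θ) ≠ (x', θ'))
    (hd : d ≤ hammingDist x x')
    (ρB : Matrix (Fin n → Bool) (Fin n → Bool) ℂ)
    (hρ : ρB.PosSemidef) (htr : ρB.trace = 1) :
    (Vproj n δ x θ * ρB).trace.re + (Vproj n δ x' θ' * ρB).trace.re
      ≤ 1 + (2 : ℝ) ^ (-(d : ℝ) / 2 + δ * n + binEnt δ * n) :=
  stmt16_general δ hδ0 hδ x x' θ θ' hd ρB hρ htr
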